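/- Let m, n ≥ 2 and let v be a non-corner vertex of the grid graph G(m,n) (i.e., v is not one of (0,0), (0,n−1), (m−1,0), (m−1,n−1)). If p1 and p2 are two distinct vertices both adjacent to v, then there exists a vertex w adjacent to v with w ≠ p1, w ≠ p2, and w adjacent to neither p1 nor p2. Hence if the resource is at a non-corner vertex with both robots adjacent to it, it has an adjacent empty vertex that neither robot can reach in one move. -/

import Mathlib

/-- The grid graph `G(m,n)` on `Fin m × Fin n`: two vertices are adjacent iff their
ℓ1 distance (coordinates viewed as integers) equals 1. -/
def gridGraph (m n : ℕ) : SimpleGraph (Fin m × Fin n) where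
  Adj u v := |(u.1 : ℤ) - (v.1 : ℤ)| + |(u.2 : ℤ) - (v.2 : ℤ)| = 1
  symm := by
    constructor
    intro u v h
    simpa [abs_sub_comm] using h
  loopless := by
    constructor
    intro u h
    simp at h

/-!
`G(m,n)` is the box product of the path graphs `P_m` and `P_n`. A non-corner vertex has at least
three neighbours, so one of them, `w`, is neither `p1` nor `p2`. Colouring each path by parity and
adding the colours 2-colours the grid, so it is triangle-free; hence `w`, a neighbour of `v`, is
adjacent to neither of the neighbours `p1`, `p2` of `v`.
-/

namespace SimpleGraph

variable {α β γ : Type*} {G : SimpleGraph α} {H : SimpleGraph β}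

def Coloring.boxProd [Add γ] [IsCancelAdd γ] (c : G.Coloring γ) (d : H.Coloring γ) :
    (G □ H).Coloring γ :=
  Coloring.mk (fun x ↦ c x.1 + d x.2) <| by
    rintro ⟨a₁, b₁⟩ ⟨a₂, b₂⟩ (⟨hadj, rfl⟩ | ⟨hadj, rfl⟩) <;> simp only [ne_eq]
    · exact fun h ↦ c.valid hadj (add_right_cancel h)
    · exact fun h ↦ d.valid hadj (add_left_cancel h)

theorem Colorable.boxProd {k : ℕ} (hG : G.Colorable k) (hH : H.Colorable k) :
    (G □ H).Colorable k := by
  obtain _ | k := k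
  · have := hG.isEmpty
    exact .of_isEmpty 0
  · exact ⟨hG.some.boxProd hH.some⟩

theorem encard_neighborSet_boxProd (x : α × β) :
    ((G □ H).neighborSet x).encard = (G.neighborSet x.1).encard + (H.neighborSet x.2).encard := by
  have hdisj : Disjoint (G.neighborSet x.1 ×ˢ {x.2}) ({x.1} ×ˢ H.neighborSet x.2) := by
    rw [Set.disjoint_left]
    rintro ⟨a, b⟩ ⟨ha, -⟩ ⟨rfl, -⟩
    exact G.loopless.irrefl _ ha
  rw [neighborSet_boxProd, Set.encard_union_eq hdisj, Set.prod_singleton, Set.singleton_prod,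
    (Prod.mk_left_injective x.2).encard_image, (Prod.mk_right_injective x.1).encard_image]

theorem one_le_encard_neighborSet_pathGraph {n : ℕ} (hn : 2 ≤ n) (i : Fin n) :
    1 ≤ ((pathGraph n).neighborSet i).encard := by
  rw [Set.one_le_encard_iff_nonempty]
  by_cases hi : (i : ℕ) = 0
  · exact ⟨⟨1, hn⟩, pathGraph_adj.mpr (by dsimp only; omega)⟩
  · exact ⟨⟨i - 1, by omega⟩, pathGraph_adj.mpr (by dsimp only; omega)⟩

theorem two_le_encard_neighborSet_pathGraph {n : ℕ} {i : Fin n} (h₀ : (i : ℕ) ≠ 0)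
    (h₁ : (i : ℕ) ≠ n - 1) : 2 ≤ ((pathGraph n).neighborSet i).encard := by
  have hne : (⟨i - 1, by omega⟩ : Fin n) ≠ ⟨i + 1, by omega⟩ := by simp
  rw [← Set.encard_pair hne]
  refine Set.encard_le_encard (Set.pair_subset ?_ ?_) <;>
    exact (mem_neighborSet _ _ _).mpr (pathGraph_adj.mpr (by dsimp only; omega))

theorem exists_adj_ne_not_adj_of_cliqueFree_three {G : SimpleGraph α} (hG : G.CliqueFree 3)
    {v p₁ p₂ : α} (hv : 3 ≤ (G.neighborSet v).encard) (h₁ : G.Adj v p₁) (h₂ : G.Adj v p₂) :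
    ∃ w, G.Adj v w ∧ w ≠ p₁ ∧ w ≠ p₂ ∧ ¬G.Adj w p₁ ∧ ¬G.Adj w p₂ := by
  classical
  obtain ⟨w, hw, hw₁₂⟩ : ∃ w ∈ G.neighborSet v, w ∉ ({p₁, p₂} : Set α) := by
    by_contra! hsub
    have : (G.neighborSet v).encard ≤ 2 :=
      calc (G.neighborSet v).encard ≤ ({p₁, p₂} : Set α).encard := Set.encard_le_encard hsub
        _ ≤ ({p₂} : Set α).encard + 1 := Set.encard_insert_le _ _
        _ = 2 := by rw [Set.encard_singleton, one_add_one_eq_two]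
    exact absurd (hv.trans this) (by decide)
  simp only [Set.mem_insert_iff, Set.mem_singleton_iff, not_or] at hw₁₂
  have no_triangle {p} (hp : G.Adj v p) : ¬G.Adj w p := fun hwp ↦
    hG {v, w, p} (is3Clique_triple_iff.mpr ⟨hw, hp, hwp⟩)
  exact ⟨w, hw, hw₁₂.1, hw₁₂.2, no_triangle h₁, no_triangle h₂⟩

end SimpleGraph

open SimpleGraph

theorem gridGraph_eq_boxProd (m n : ℕ) : gridGraph m n = pathGraph m □ pathGraph n := by
  ext u v
  simp only [gridGraph, boxProd_adj, pathGraph_adj, Fin.ext_iff]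
  rcases abs_cases ((u.1 : ℤ) - v.1) with ⟨h₁, _⟩ | ⟨h₁, _⟩ <;>
    rcases abs_cases ((u.2 : ℤ) - v.2) with ⟨h₂, _⟩ | ⟨h₂, _⟩ <;>
      rw [h₁, h₂] <;> omega

theorem gridGraph_cliqueFree_three (m n : ℕ) : (gridGraph m n).CliqueFree 3 := by
  rw [gridGraph_eq_boxProd]
  exact ((pathGraph.bicoloring m).colorable.boxProd (pathGraph.bicoloring n).colorable).cliqueFree
    (by simp)

theorem three_le_encard_neighborSet_gridGraph {m n : ℕ} (hm : 2 ≤ m) (hn : 2 ≤ n)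
    {v : Fin m × Fin n}
    (hv : (v.1 : ℕ) ≠ 0 ∧ (v.1 : ℕ) ≠ m - 1 ∨ (v.2 : ℕ) ≠ 0 ∧ (v.2 : ℕ) ≠ n - 1) :
    3 ≤ ((gridGraph m n).neighborSet v).encard := by
  rw [gridGraph_eq_boxProd, encard_neighborSet_boxProd]
  rcases hv with ⟨h₀, h₁⟩ | ⟨h₀, h₁⟩
  · exact add_le_add (two_le_encard_neighborSet_pathGraph h₀ h₁)
      (one_le_encard_neighborSet_pathGraph hn v.2)
  · calc (3 : ℕ∞) = 1 + 2 := by norm_num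
      _ ≤ _ := add_le_add (one_le_encard_neighborSet_pathGraph hm v.1)
        (two_le_encard_neighborSet_pathGraph h₀ h₁)

/-- Escape claim for a non-corner vertex: if `v` is not one of the four corner
vertices and `p1 ≠ p2` are both adjacent to `v`, then `v` has a neighbor `w`
distinct from `p1, p2` and adjacent to neither of them. -/
theorem noncorner_escape (m n : ℕ) (hm : 2 ≤ m) (hn : 2 ≤ n)
    (v p1 p2 : Fin m × Fin n)
    (hv1 : v ≠ (⟨0, by omega⟩, ⟨0, by omega⟩))
    (hv2 : v ≠ (⟨0, by omega⟩, ⟨n - 1, by omega⟩))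
    (hv3 : v ≠ (⟨m - 1, by omega⟩, ⟨0, by omega⟩))
    (hv4 : v ≠ (⟨m - 1, by omega⟩, ⟨n - 1, by omega⟩))
    (h1 : (gridGraph m n).Adj v p1) (h2 : (gridGraph m n).Adj v p2) :
    ∃ w : Fin m × Fin n, (gridGraph m n).Adj v w ∧ w ≠ p1 ∧ w ≠ p2 ∧
      ¬(gridGraph m n).Adj w p1 ∧ ¬(gridGraph m n).Adj w p2 := by
  have hv : (v.1 : ℕ) ≠ 0 ∧ (v.1 : ℕ) ≠ m - 1 ∨ (v.2 : ℕ) ≠ 0 ∧ (v.2 : ℕ) ≠ n - 1 := by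
    simp only [ne_eq, Prod.ext_iff, Fin.ext_iff] at hv1 hv2 hv3 hv4
    omega
  exact exists_adj_ne_not_adj_of_cliqueFree_three (gridGraph_cliqueFree_three m n)
    (three_le_encard_neighborSet_gridGraph hm hn hv) h1 h2
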